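/- Let H be the heart of a t-structure on a triangulated category D, (T, F) a torsion pair in H, and K = F * T[-1] the right HRS-tilted heart. Then T = K[1] ∩ H and F = K ∩ H. -/

import Mathlib

/-!
Since `Hom(H[1], H) = 0`, and hence `Hom(H, H[-1]) = 0`, the torsion triangle
`t → h → f → t[1]` of an object `h ∈ H` has `f = 0` as soon as `Hom(h, F) = 0`, and `t = 0` as
soon as `Hom(T, h) = 0`; thus `T = H ∩ ⊥F` and `F = H ∩ T⊥`. Perpendicular classes are closed
under extensions, and `F, T[-1] ⊆ T⊥` while `F[1], T ⊆ ⊥F`, so `K ⊆ T⊥` and `K[1] ⊆ ⊥F`.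
Conversely `F ⊆ F * 0 ⊆ K` and `T[-1] ⊆ 0 * T[-1] ⊆ K`, since `0` lies in both `T` and `F`.
-/

open CategoryTheory Category Limits Pretriangulated

universe v u

namespace SMPaper

variable {C : Type u} [Category.{v} C] [Preadditive C] [HasZeroObject C] [HasShift C ℤ]
  [∀ n : ℤ, (shiftFunctor C n).Additive] [Pretriangulated C]

/-- The image of a set of objects under the `n`-th shift, closed under isomorphism. -/
def shiftSet (S : Set C) (n : ℤ) : Set C :=
  {d | ∃ s ∈ S, Nonempty ((shiftFunctor C n).obj s ≅ d)}

/-- The extension product `A * B`: objects `d` fitting in a triangle `a → d → b → a[1]`. -/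
def star (A B : Set C) : Set C :=
  {d | ∃ (a b : C) (f : a ⟶ d) (g : d ⟶ b) (h : b ⟶ (shiftFunctor C (1 : ℤ)).obj a),
    a ∈ A ∧ b ∈ B ∧ Triangle.mk f g h ∈ (distTriang C)}

/-- `Hom(A, B) = 0`. -/
def homOrth (A B : Set C) : Prop :=
  ∀ ⦃a : C⦄, a ∈ A → ∀ ⦃b : C⦄, b ∈ B → ∀ f : a ⟶ b, f = 0

/-- Right perpendicular `S^⊥`. -/
def rPerp (S : Set C) : Set C := {d | ∀ s ∈ S, ∀ f : s ⟶ d, f = 0}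

/-- Left perpendicular `^⊥S`. -/
def lPerp (S : Set C) : Set C := {d | ∀ s ∈ S, ∀ f : d ⟶ s, f = 0}

def isoClosure (S : Set C) : Set C := {d | ∃ s ∈ S, Nonempty (s ≅ d)}

/-- The extension closure of a set of objects. -/
inductive ExtClosureP (S : Set C) : C → Prop
  | of (s : C) : s ∈ S → ExtClosureP S s
  | zero (z : C) : IsZero z → ExtClosureP S z
  | iso (x y : C) : (x ≅ y) → ExtClosureP S x → ExtClosureP S y
  | ext (a d b : C) (f : a ⟶ d) (g : d ⟶ b) (h : b ⟶ (shiftFunctor C (1 : ℤ)).obj a) :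
      Triangle.mk f g h ∈ (distTriang C) → ExtClosureP S a → ExtClosureP S b → ExtClosureP S d

def extClosure (S : Set C) : Set C := {d | ExtClosureP S d}

/-- `⟨S⟩[i] * ⟨S⟩[i-1] * ⋯ * ⟨S⟩[i-n]`. -/
def prodDown (S : Set C) : ℤ → ℕ → Set C
  | i, 0 => shiftSet (extClosure S) i
  | i, n + 1 => star (shiftSet (extClosure S) i) (prodDown S (i - 1) n)

/-- `susp S = ⋃_{n ≥ 0} ⟨S⟩[n] * ⋯ * ⟨S⟩[0]`. -/
def suspSet (S : Set C) : Set C := {d | ∃ n : ℕ, d ∈ prodDown S n n}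

/-- `cosusp S = ⋃_{n ≥ 0} ⟨S⟩[0] * ⋯ * ⟨S⟩[-n]`. -/
def cosuspSet (S : Set C) : Set C := {d | ∃ n : ℕ, d ∈ prodDown S 0 n}

/-- `cosusp (S[-1]) = ⋃_{n ≥ 0} ⟨S⟩[-1] * ⋯ * ⟨S⟩[-1-n]`. -/
def cosuspNeg (S : Set C) : Set C := {d | ∃ n : ℕ, d ∈ prodDown S (-1) n}

/-- A t-structure `(X, Y)`: full (iso-closed, containing zero) subcategories with
`Hom(X, Y) = 0`, `D = X * Y` and `X[1] ⊆ X`. -/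
structure IsTStructure (X Y : Set C) : Prop where
  isoX : ∀ ⦃x y : C⦄, (x ≅ y) → x ∈ X → y ∈ X
  isoY : ∀ ⦃x y : C⦄, (x ≅ y) → x ∈ Y → y ∈ Y
  zeroX : ∀ z : C, IsZero z → z ∈ X
  zeroY : ∀ z : C, IsZero z → z ∈ Y
  hom : homOrth X Y
  gen : ∀ d : C, d ∈ star X Y
  shift : shiftSet X 1 ⊆ X

/-- A co-t-structure `(W, X)`. -/
structure IsCoTStructure (W X : Set C) : Prop where
  isoW : ∀ ⦃x y : C⦄, (x ≅ y) → x ∈ W → y ∈ W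
  isoX : ∀ ⦃x y : C⦄, (x ≅ y) → x ∈ X → y ∈ X
  zeroW : ∀ z : C, IsZero z → z ∈ W
  zeroX : ∀ z : C, IsZero z → z ∈ X
  hom : homOrth W X
  gen : ∀ d : C, d ∈ star W X
  shift : shiftSet W (-1) ⊆ W

/-- The heart `X ∩ Y[1]` of a t-structure. -/
def heart (X Y : Set C) : Set C := X ∩ shiftSet Y 1

/-- Boundedness of a torsion pair/t-structure. -/
def IsBoundedTS (X Y : Set C) : Prop :=
  ∀ d : C, (∃ n : ℤ, d ∈ shiftSet X n) ∧ (∃ n : ℤ, d ∈ shiftSet Y n)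

/-- A torsion pair `(T, F)` in the heart `H`: `Hom(T, F) = 0` and every object of `H`
is an extension of an object of `F` by an object of `T`. -/
structure IsTorsionPairIn (H T F : Set C) : Prop where
  isoT : ∀ ⦃x y : C⦄, (x ≅ y) → x ∈ T → y ∈ T
  isoF : ∀ ⦃x y : C⦄, (x ≅ y) → x ∈ F → y ∈ F
  subT : T ⊆ H
  subF : F ⊆ H
  hom : homOrth T F
  gen : H ⊆ star T F

/-- `f : x → d` is a right `S`-approximation. -/
def IsRightApprox (S : Set C) {x d : C} (f : x ⟶ d) : Prop :=
  x ∈ S ∧ ∀ ⦃x' : C⦄, x' ∈ S → ∀ g : x' ⟶ d, ∃ h : x' ⟶ x, h ≫ f = g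

/-- `f : d → x` is a left `S`-approximation. -/
def IsLeftApprox (S : Set C) {d x : C} (f : d ⟶ x) : Prop :=
  x ∈ S ∧ ∀ ⦃x' : C⦄, x' ∈ S → ∀ g : d ⟶ x', ∃ h : x ⟶ x', f ≫ h = g

def RightMinimal {x d : C} (f : x ⟶ d) : Prop :=
  ∀ β : x ⟶ x, β ≫ f = f → IsIso β

def LeftMinimal {d x : C} (f : d ⟶ x) : Prop :=
  ∀ β : x ⟶ x, f ≫ β = f → IsIso β

def HasRightApprox (S : Set C) (d : C) : Prop := ∃ (x : C) (f : x ⟶ d), IsRightApprox S f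

def HasLeftApprox (S : Set C) (d : C) : Prop := ∃ (x : C) (f : d ⟶ x), IsLeftApprox S f

def ContravariantlyFiniteIn (S A : Set C) : Prop := ∀ d ∈ A, HasRightApprox S d

def CovariantlyFiniteIn (S A : Set C) : Prop := ∀ d ∈ A, HasLeftApprox S d

/-- An orthogonal collection (semibrick). -/
structure IsOrthogonal (U : Set C) : Prop where
  nonzero : ∀ u ∈ U, ¬ IsZero u
  hom : ∀ ⦃u v : C⦄, u ∈ U → v ∈ U → ¬ Nonempty (u ≅ v) → ∀ f : u ⟶ v, f = 0
  div : ∀ u ∈ U, ∀ f : u ⟶ u, f = 0 ∨ IsIso f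

/-- An `∞`-orthogonal collection. -/
def IsInfOrthogonal (U : Set C) : Prop :=
  IsOrthogonal U ∧ ∀ ⦃u v : C⦄, u ∈ U → v ∈ U → ∀ m : ℤ, 0 < m →
    ∀ f : (shiftFunctor C m).obj u ⟶ v, f = 0

/-- A simple-minded collection. -/
def IsSMC (U : Set C) : Prop :=
  IsInfOrthogonal U ∧ ∀ d : C, ∃ i j : ℤ, j ≤ i ∧ d ∈ prodDown U i (i - j).toNat

/-- `m` is a right mutation `∂_S(d)` of `d` with respect to `S`. -/
def IsRightMutation (S : Set C) (d m : C) : Prop :=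
  (d ∈ S ∧ Nonempty (d ≅ m)) ∨
  (d ∉ S ∧ ∃ (s : C) (f : s ⟶ (shiftFunctor C (1 : ℤ)).obj d)
      (g : (shiftFunctor C (1 : ℤ)).obj d ⟶ m) (h : m ⟶ (shiftFunctor C (1 : ℤ)).obj s),
    IsRightApprox (extClosure S) f ∧ RightMinimal f ∧ Triangle.mk f g h ∈ (distTriang C))

/-- `m` is a left mutation `∂⁻_S(d)` of `d` with respect to `S`. -/
def IsLeftMutation (S : Set C) (d m : C) : Prop :=
  (d ∈ S ∧ Nonempty (d ≅ m)) ∨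
  (d ∉ S ∧ ∃ (s : C) (g : m ⟶ (shiftFunctor C (-1 : ℤ)).obj d)
      (f : (shiftFunctor C (-1 : ℤ)).obj d ⟶ s) (h : s ⟶ (shiftFunctor C (1 : ℤ)).obj m),
    IsLeftApprox (extClosure S) f ∧ LeftMinimal f ∧ Triangle.mk g f h ∈ (distTriang C))

def rightMutationSet (S U : Set C) : Set C := {m | ∃ u ∈ U, IsRightMutation S u m}

def leftMutationSet (S U : Set C) : Set C := {m | ∃ u ∈ U, IsLeftMutation S u m}

/-- `h` is a simple object of the heart `H`. -/
def IsSimpleIn (H : Set C) (h : C) : Prop :=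
  h ∈ H ∧ ¬ IsZero h ∧
    ∀ (a b : C) (f : a ⟶ h) (g : h ⟶ b) (w : b ⟶ (shiftFunctor C (1 : ℤ)).obj a),
      a ∈ H → b ∈ H → Triangle.mk f g w ∈ (distTriang C) → IsZero a ∨ IsZero b

def simplesOf (H : Set C) : Set C := {h | IsSimpleIn H h}

/-- A heart is a length category iff every object has a finite composition series, i.e.
lies in the extension closure of the simple objects. -/
def HeartIsLength (H : Set C) : Prop := H ⊆ extClosure (simplesOf H)

/-- A bounded t-structure with length heart. -/
def IsLengthHeart (X Y : Set C) : Prop :=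
  IsTStructure X Y ∧ IsBoundedTS X Y ∧ HeartIsLength (heart X Y)

/-- An `S`-mutation pair `(A, B)`. -/
def IsSMutationPair (S A B : Set C) : Prop :=
  isoClosure A =
    lPerp S ∩ rPerp S ∩ lPerp (shiftSet S (-1)) ∩ shiftSet (star (extClosure S) B) (-1) ∧
  isoClosure B =
    lPerp S ∩ rPerp S ∩ rPerp (shiftSet S 1) ∩ shiftSet (star A (extClosure S)) 1

/-- The conditions of the SMC Setup. -/
def SMCSetup (S : Set C) : Prop :=
  CovariantlyFiniteIn (extClosure S)
    {d | ∀ s ∈ S, ∀ m : ℤ, m < 0 → ∀ f : d ⟶ (shiftFunctor C m).obj s, f = 0} ∧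
  ContravariantlyFiniteIn (extClosure S)
    {d | ∀ s ∈ S, ∀ m : ℤ, 0 < m → ∀ f : (shiftFunctor C m).obj s ⟶ d, f = 0} ∧
  (∀ d : C, ∃ N : ℤ, ∀ m : ℤ, m ≤ N → ∀ s ∈ S, ∀ f : d ⟶ (shiftFunctor C m).obj s, f = 0) ∧
  (∀ d : C, ∃ N : ℤ, ∀ m : ℤ, N ≤ m → ∀ s ∈ S, ∀ f : (shiftFunctor C m).obj s ⟶ d, f = 0)

/-- `f : p → h` is an epimorphism in the heart `H`, i.e. fits in a triangle
`a → p → h → a[1]` with `a ∈ H`. -/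
def IsEpiIn (H : Set C) {p h : C} (f : p ⟶ h) : Prop :=
  ∃ (a : C) (i : a ⟶ p) (w : h ⟶ (shiftFunctor C (1 : ℤ)).obj a),
    a ∈ H ∧ Triangle.mk i f w ∈ (distTriang C)

/-- `f : h → i` is a monomorphism in the heart `H`. -/
def IsMonoIn (H : Set C) {h i : C} (f : h ⟶ i) : Prop :=
  ∃ (b : C) (q : i ⟶ b) (w : b ⟶ (shiftFunctor C (1 : ℤ)).obj h),
    b ∈ H ∧ Triangle.mk f q w ∈ (distTriang C)

def IsProjectiveIn (H : Set C) (p : C) : Prop :=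
  p ∈ H ∧ ∀ ⦃x y : C⦄ (f : x ⟶ y), x ∈ H → y ∈ H → IsEpiIn H f →
    ∀ g : p ⟶ y, ∃ l : p ⟶ x, l ≫ f = g

def IsInjectiveIn (H : Set C) (i : C) : Prop :=
  i ∈ H ∧ ∀ ⦃x y : C⦄ (f : x ⟶ y), x ∈ H → y ∈ H → IsMonoIn H f →
    ∀ g : x ⟶ i, ∃ l : y ⟶ i, f ≫ l = g

def EnoughProjectivesIn (H : Set C) : Prop :=
  ∀ h ∈ H, ∃ (p : C) (f : p ⟶ h), IsProjectiveIn H p ∧ IsEpiIn H f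

def EnoughInjectivesIn (H : Set C) : Prop :=
  ∀ h ∈ H, ∃ (i : C) (f : h ⟶ i), IsInjectiveIn H i ∧ IsMonoIn H f

end SMPaper

namespace SMPaper

open scoped ZeroObject

section Shift

variable {C : Type u} [Category.{v} C] [HasShift C ℤ]

lemma shiftSet_mono {S S' : Set C} (h : S ⊆ S') (n : ℤ) : shiftSet S n ⊆ shiftSet S' n :=
  fun _ ⟨s, hs, e⟩ => ⟨s, h hs, e⟩

lemma subset_shiftSet_shiftSet (S : Set C) {m n : ℤ} (hmn : m + n = 0) :
    S ⊆ shiftSet (shiftSet S m) n :=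
  fun s hs => ⟨_, ⟨s, hs, ⟨Iso.refl _⟩⟩, ⟨(shiftFunctorCompIsoId C m n hmn).app s⟩⟩

lemma shiftSet_shiftSet_subset {S : Set C} (hS : ∀ ⦃x y : C⦄, (x ≅ y) → x ∈ S → y ∈ S)
    {m n : ℤ} (hmn : m + n = 0) : shiftSet (shiftSet S m) n ⊆ S := by
  rintro d ⟨e, ⟨s, hs, ⟨φ⟩⟩, ⟨ψ⟩⟩
  exact hS ((shiftFunctorCompIsoId C m n hmn).symm.app s ≪≫ (shiftFunctor C n).mapIso φ ≪≫ ψ) hs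

end Shift

section Orthogonality

variable {C : Type u} [Category.{v} C] [Preadditive C]

lemma homOrth.mono {A B A' B' : Set C} (h : homOrth A B) (hA : A' ⊆ A) (hB : B' ⊆ B) :
    homOrth A' B' :=
  fun _ ha _ hb => h (hA ha) (hB hb)

variable [HasShift C ℤ] [∀ n : ℤ, (shiftFunctor C n).Additive]

lemma homOrth_shiftSet {A B : Set C} (h : homOrth A B) (n : ℤ) :
    homOrth (shiftSet A n) (shiftSet B n) := by
  rintro _ ⟨a, ha, ⟨φ⟩⟩ _ ⟨b, hb, ⟨ψ⟩⟩ f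
  have hpre : (shiftFunctor C n).preimage (φ.hom ≫ f ≫ ψ.inv) = 0 := h ha hb _
  have hshift : φ.hom ≫ f ≫ ψ.inv = 0 := by
    rw [← (shiftFunctor C n).map_preimage (φ.hom ≫ f ≫ ψ.inv), hpre, Functor.map_zero]
  simpa using φ.inv ≫= hshift =≫ ψ.hom

lemma homOrth_shiftSet_heart {X Y : Set C} (hXY : homOrth X Y) :
    homOrth (shiftSet (heart X Y) 1) (heart X Y) :=
  (homOrth_shiftSet hXY 1).mono (shiftSet_mono Set.inter_subset_left 1) Set.inter_subset_right

lemma homOrth_shiftSet_neg_of_homOrth_shiftSet {H : Set C} (hH : homOrth (shiftSet H 1) H) :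
    homOrth H (shiftSet H (-1)) :=
  (homOrth_shiftSet hH (-1)).mono (subset_shiftSet_shiftSet H (by norm_num)) le_rfl

end Orthogonality

variable {C : Type u} [Category.{v} C] [Preadditive C] [HasZeroObject C] [HasShift C ℤ]
  [∀ n : ℤ, (shiftFunctor C n).Additive] [Pretriangulated C]

lemma isZero₃_of_mor₂_eq_zero {T : Triangle C} (hT : T ∈ distTriang C) (h₂ : T.mor₂ = 0)
    (h : ∀ g : T.obj₁⟦(1 : ℤ)⟧ ⟶ T.obj₃, g = 0) : IsZero T.obj₃ := by
  obtain ⟨g, hg⟩ := Triangle.yoneda_exact₃ _ hT (𝟙 _) (by rw [h₂, zero_comp])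
  rw [IsZero.iff_id_eq_zero, hg, h g, comp_zero]

lemma isZero₁_of_mor₁_eq_zero {T : Triangle C} (hT : T ∈ distTriang C) (h₁ : T.mor₁ = 0)
    (h : ∀ g : T.obj₁ ⟶ T.obj₃⟦(-1 : ℤ)⟧, g = 0) : IsZero T.obj₁ := by
  obtain ⟨g, hg⟩ := Triangle.coyoneda_exact₂ _ (inv_rot_of_distTriang _ hT) (𝟙 T.obj₁)
    (by change 𝟙 T.obj₁ ≫ T.mor₁ = 0; rw [h₁, comp_zero])
  rw [IsZero.iff_id_eq_zero]
  exact hg.trans ((congrArg (· ≫ _) (h g)).trans zero_comp)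

section Star

variable {A B S : Set C}

lemma mem_star_of_iso {d d' : C} (hd : d ∈ star A B) (e : d ≅ d') : d' ∈ star A B := by
  obtain ⟨a, b, u, v, w, ha, hb, hT⟩ := hd
  refine ⟨a, b, u ≫ e.hom, e.inv ≫ v, w, ha, hb, isomorphic_distinguished _ hT _ ?_⟩
  exact Triangle.isoMk _ _ (Iso.refl _) e.symm (Iso.refl _)
    (by simp [Triangle.mk]) (by simp [Triangle.mk]) (by simp [Triangle.mk])

lemma shiftSet_star_subset (n : ℤ) :
    shiftSet (star A B) n ⊆ star (shiftSet A n) (shiftSet B n) := by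
  rintro d ⟨k, ⟨a, b, u, v, w, ha, hb, hT⟩, ⟨e⟩⟩
  refine mem_star_of_iso ?_ e
  exact ⟨_, _, _, _, _, ⟨a, ha, ⟨Iso.refl _⟩⟩, ⟨b, hb, ⟨Iso.refl _⟩⟩,
    Triangle.shift_distinguished _ hT n⟩

lemma subset_star_left {z : C} (hz : IsZero z) (hzB : z ∈ B) : A ⊆ star A B :=
  fun a ha => ⟨a, z, 𝟙 a, 0, 0, ha, hzB,
    (Triangle.distinguished_iff_of_isZero₃ _ hz).2 (inferInstanceAs (IsIso (𝟙 a)))⟩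

lemma subset_star_right {z : C} (hz : IsZero z) (hzA : z ∈ A) : B ⊆ star A B :=
  fun b hb => ⟨z, b, 0, 𝟙 b, 0, hzA, hb,
    (Triangle.distinguished_iff_of_isZero₁ _ hz).2 (inferInstanceAs (IsIso (𝟙 b)))⟩

lemma star_subset_lPerp (hA : A ⊆ lPerp S) (hB : B ⊆ lPerp S) : star A B ⊆ lPerp S := by
  rintro d ⟨a, b, u, v, w, ha, hb, hT⟩ s hs g
  obtain ⟨g', rfl⟩ := Triangle.yoneda_exact₂ _ hT g (hA ha s hs _)
  rw [show g' = 0 from hB hb s hs g']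
  exact comp_zero

lemma star_subset_rPerp (hA : A ⊆ rPerp S) (hB : B ⊆ rPerp S) : star A B ⊆ rPerp S := by
  rintro d ⟨a, b, u, v, w, ha, hb, hT⟩ s hs g
  obtain ⟨g', rfl⟩ := Triangle.coyoneda_exact₂ _ hT g (hB hb s hs _)
  rw [show g' = 0 from hA ha s hs g']
  exact zero_comp

end Star

namespace IsTorsionPairIn

variable {H T F : Set C}

lemma inter_lPerp_subset (hTF : IsTorsionPairIn H T F) (hH : homOrth (shiftSet H 1) H) :
    H ∩ lPerp F ⊆ T := by
  rintro h ⟨hh, hperp⟩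
  obtain ⟨t, f, i, p, w, ht, hf, hT⟩ := hTF.gen hh
  have hf0 : IsZero f := isZero₃_of_mor₂_eq_zero hT (hperp f hf p)
    (hH ⟨t, hTF.subT ht, ⟨Iso.refl _⟩⟩ (hTF.subF hf))
  have : IsIso i := (Triangle.isZero₃_iff_isIso₁ _ hT).1 hf0
  exact hTF.isoT (asIso i) ht

lemma inter_rPerp_subset (hTF : IsTorsionPairIn H T F) (hH : homOrth H (shiftSet H (-1))) :
    H ∩ rPerp T ⊆ F := by
  rintro h ⟨hh, hperp⟩
  obtain ⟨t, f, i, p, w, ht, hf, hT⟩ := hTF.gen hh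
  have ht0 : IsZero t := isZero₁_of_mor₁_eq_zero hT (hperp t ht i)
    (hH (hTF.subT ht) ⟨f, hTF.subF hf, ⟨Iso.refl _⟩⟩)
  have : IsIso p := (Triangle.isZero₁_iff_isIso₂ _ hT).1 ht0
  exact hTF.isoF (asIso p).symm hf

lemma star_shiftSet_neg_subset_rPerp (hTF : IsTorsionPairIn H T F)
    (hH : homOrth H (shiftSet H (-1))) : star F (shiftSet T (-1)) ⊆ rPerp T :=
  star_subset_rPerp (fun _ hf _ ht => hTF.hom ht hf)
    (fun _ ht' _ ht => hH (hTF.subT ht) (shiftSet_mono hTF.subT _ ht'))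

lemma shiftSet_star_shiftSet_neg_subset_lPerp (hTF : IsTorsionPairIn H T F)
    (hH : homOrth (shiftSet H 1) H) : shiftSet (star F (shiftSet T (-1))) 1 ⊆ lPerp F :=
  (shiftSet_star_subset 1).trans <| star_subset_lPerp
    (fun _ hf' _ hf => hH (shiftSet_mono hTF.subF 1 hf') (hTF.subF hf))
    ((shiftSet_shiftSet_subset hTF.isoT (by norm_num)).trans fun _ ht _ hf => hTF.hom ht hf)

end IsTorsionPairIn

lemma IsTStructure.zero_mem_heart {X Y : Set C} (hXY : IsTStructure X Y) :
    (0 : C) ∈ heart X Y :=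
  ⟨hXY.zeroX _ (isZero_zero C),
    ⟨0, hXY.zeroY _ (isZero_zero C), ⟨(shiftFunctor C (1 : ℤ)).mapZeroObject⟩⟩⟩

/-- for the right HRS tilted heart `K = F * T[-1]` one has
`T = K[1] ∩ H` and `F = K ∩ H`. -/
theorem torsion_pair_from_tilted_heart {X Y T F : Set C} (hXY : IsTStructure X Y)
    (hTF : IsTorsionPairIn (heart X Y) T F) :
    T = shiftSet (star F (shiftSet T (-1))) 1 ∩ heart X Y ∧
    F = star F (shiftSet T (-1)) ∩ heart X Y := by
  have hH := homOrth_shiftSet_heart hXY.hom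
  have hH' := homOrth_shiftSet_neg_of_homOrth_shiftSet hH
  have hT := hTF.inter_lPerp_subset hH
  have hF := hTF.inter_rPerp_subset hH'
  have h0T : (0 : C) ∈ T := hT ⟨hXY.zero_mem_heart, fun _ _ _ => (isZero_zero C).eq_of_src _ _⟩
  have h0F : (0 : C) ∈ F := hF ⟨hXY.zero_mem_heart, fun _ _ _ => (isZero_zero C).eq_of_tgt _ _⟩
  have hK_rPerp := hTF.star_shiftSet_neg_subset_rPerp hH'
  have hK_lPerp := hTF.shiftSet_star_shiftSet_neg_subset_lPerp hH
  refine ⟨subset_antisymm ?_ ?_, subset_antisymm ?_ ?_⟩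
  · intro t ht
    exact ⟨shiftSet_mono (subset_star_right (isZero_zero C) h0F) 1
      (subset_shiftSet_shiftSet T (by norm_num) ht), hTF.subT ht⟩
  · rintro h ⟨hK, hh⟩
    exact hT ⟨hh, hK_lPerp hK⟩
  · intro f hf
    have h0T' : (0 : C) ∈ shiftSet T (-1) :=
      ⟨0, h0T, ⟨(shiftFunctor C (-1 : ℤ)).mapZeroObject⟩⟩
    exact ⟨subset_star_left (isZero_zero C) h0T' hf, hTF.subF hf⟩
  · rintro h ⟨hK, hh⟩
    exact hF ⟨hh, hK_rPerp hK⟩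

end SMPaper
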